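/- Let ι be a nonempty finite type (the robots) and let x : ℕ → ι → ℝ² be a sequence of configurations satisfying, for each i ∈ ℕ: if all robots occupy a common position at step i, then x(i+1) = x(i) and set d_i := 0; otherwise there exist a, b ∈ ι with x i a ≠ x i b realizing the minimum of dist(x i p, x i q) over all p, q ∈ ι with x i p ≠ x i q, and, setting D_i := midpoint(x i a, x i b) and d_i := dist(x i a, x i b)/2, every j ∈ ι satisfies x (i+1) j = x i j + (d_i / dist(x i j, D_i)) • (D_i − x i j) (each robot moves distance d_i straight towards D_i; note that d_i ≤ dist(x i j, D_i) holds automatically, so no robot overshoots D_i). Then for every nonempty subset N ⊆ ι, writing f := |ι| − |N|, and for every point c and real r with dist(x 0 j, c) ≤ r for all j ∈ N, there exists m ∈ ℕ such that all robots of N occupy one common position at step m and Σ_{i<m} d_i ≤ (f + 2)·r. (The Shrink-Shortest-Interval algorithm gathers the reliable robots N, and since each robot travels exactly d_i in step i, it does so within time at most (f + 2) times the optimal gathering time of N.) -/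
import Mathlib

section helpers
variable {E : Type*} [NormedAddCommGroup E] [NormedSpace ℝ E]

lemma ssi_core (p q D : E) (t : ℝ) (ht : 0 < t)
    (hp : t ≤ dist p D) (hq : t ≤ dist q D) (hqp : dist q D ≤ dist p D) :
    dist (p + (t / dist p D) • (D - p)) (q + (t / dist q D) • (D - q)) ≤
      (1 - t / dist q D) * dist p q + (t / dist q D * dist p D - t) := by
  have hY : 0 < dist q D := lt_of_lt_of_le ht hq
  have hX : 0 < dist p D := lt_of_lt_of_le ht hp
  have hid : p + (t / dist p D) • (D - p) - (q + (t / dist q D) • (D - q)) =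
      (1 - t / dist q D) • (p - q) + (t / dist q D - t / dist p D) • (p - D) := by
    module
  have h1 : 0 ≤ 1 - t / dist q D := by
    rw [sub_nonneg]
    exact div_le_one_of_le₀ hq hY.le
  have h2 : 0 ≤ t / dist q D - t / dist p D := by
    rw [sub_nonneg]
    gcongr
  calc dist (p + (t / dist p D) • (D - p)) (q + (t / dist q D) • (D - q))
      = ‖(1 - t / dist q D) • (p - q) + (t / dist q D - t / dist p D) • (p - D)‖ := by
        rw [dist_eq_norm, hid]
    _ ≤ ‖(1 - t / dist q D) • (p - q)‖ + ‖(t / dist q D - t / dist p D) • (p - D)‖ :=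
        norm_add_le _ _
    _ = (1 - t / dist q D) * dist p q + (t / dist q D - t / dist p D) * dist p D := by
        rw [norm_smul, norm_smul, Real.norm_of_nonneg h1, Real.norm_of_nonneg h2,
          ← dist_eq_norm, ← dist_eq_norm]
    _ = (1 - t / dist q D) * dist p q + (t / dist q D * dist p D - t) := by
        rw [sub_mul _ _ (dist p D), div_mul_cancel₀ _ hX.ne']

lemma ssi_contract_aux (p q D : E) (t : ℝ) (ht : 0 < t)
    (hp : t ≤ dist p D) (hq : t ≤ dist q D) (hqp : dist q D ≤ dist p D) :
    dist (p + (t / dist p D) • (D - p)) (q + (t / dist q D) • (D - q)) ≤ dist p q := by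
  have hY : 0 < dist q D := lt_of_lt_of_le ht hq
  have hcore := ssi_core p q D t ht hp hq hqp
  have htri : dist p D ≤ dist p q + dist q D := dist_triangle p q D
  have h5 : t / dist q D * (dist p D - dist q D) ≤ t / dist q D * dist p q :=
    mul_le_mul_of_nonneg_left (by linarith) (by positivity)
  have h6 : t / dist q D * dist q D = t := div_mul_cancel₀ _ hY.ne'
  nlinarith [dist_nonneg (x := p) (y := q)]

lemma ssi_contract (p q D : E) (t : ℝ) (ht : 0 < t)
    (hp : t ≤ dist p D) (hq : t ≤ dist q D) :
    dist (p + (t / dist p D) • (D - p)) (q + (t / dist q D) • (D - q)) ≤ dist p q := by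
  rcases le_total (dist q D) (dist p D) with h | h
  · exact ssi_contract_aux p q D t ht hp hq h
  · rw [dist_comm, dist_comm p q]
    exact ssi_contract_aux q p D t ht hq hp h

lemma ssi_G_aux (p q D : E) (t G : ℝ) (ht : 0 < t)
    (hp : t ≤ dist p D) (hq : t ≤ dist q D) (hqp : dist q D ≤ dist p D)
    (hpG : dist p D ≤ G) (hg : dist p q ≤ G) :
    dist (p + (t / dist p D) • (D - p)) (q + (t / dist q D) • (D - q)) ≤ G - t := by
  have hY : 0 < dist q D := lt_of_lt_of_le ht hq
  have hcore := ssi_core p q D t ht hp hq hqp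
  have h1 : 0 ≤ 1 - t / dist q D := by
    rw [sub_nonneg]; exact div_le_one_of_le₀ hq hY.le
  have h3 : (1 - t / dist q D) * dist p q ≤ (1 - t / dist q D) * G :=
    mul_le_mul_of_nonneg_left hg h1
  have h4 : t / dist q D * dist p D ≤ t / dist q D * G :=
    mul_le_mul_of_nonneg_left hpG (by positivity)
  have h6 : t / dist q D * dist q D = t := div_mul_cancel₀ _ hY.ne'
  nlinarith [h6]

lemma ssi_G (p q D : E) (t G : ℝ) (ht : 0 < t)
    (hp : t ≤ dist p D) (hq : t ≤ dist q D)
    (hpG : dist p D ≤ G) (hqG : dist q D ≤ G) (hg : dist p q ≤ G) :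
    dist (p + (t / dist p D) • (D - p)) (q + (t / dist q D) • (D - q)) ≤ G - t := by
  rcases le_total (dist q D) (dist p D) with h | h
  · exact ssi_G_aux p q D t G ht hp hq h hpG hg
  · rw [dist_comm]
    exact ssi_G_aux q p D t G ht hq hp h hqG (by rw [dist_comm]; exact hg)

lemma dist_midpoint_le_max (z u v : E) :
    dist z (midpoint ℝ u v) ≤ max (dist z u) (dist z v) := by
  have h := dist_midpoint_midpoint_le z z u v
  rw [midpoint_self] at h
  have h1 : dist z u ≤ max (dist z u) (dist z v) := le_max_left _ _
  have h2 : dist z v ≤ max (dist z u) (dist z v) := le_max_right _ _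
  linarith

lemma dist_left_midpoint' (u v : E) : dist u (midpoint ℝ u v) = dist u v / 2 := by
  rw [dist_left_midpoint (𝕜 := ℝ)]
  norm_num
  ring

end helpers
theorem shrink_shortest_interval_gathers
    (ι : Type*) [Fintype ι] [Nonempty ι]
    (x : ℕ → ι → EuclideanSpace ℝ (Fin 2)) (d : ℕ → ℝ)
    (hgathered : ∀ i : ℕ, (∃ P, ∀ j : ι, x i j = P) → x (i + 1) = x i ∧ d i = 0)
    (hstep : ∀ i : ℕ, ¬ (∃ P, ∀ j : ι, x i j = P) →
      ∃ a b : ι, x i a ≠ x i b ∧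
        (∀ p q : ι, x i p ≠ x i q → dist (x i a) (x i b) ≤ dist (x i p) (x i q)) ∧
        d i = dist (x i a) (x i b) / 2 ∧
        ∀ j : ι, x (i + 1) j =
          x i j + (d i / dist (x i j) (midpoint ℝ (x i a) (x i b))) •
            (midpoint ℝ (x i a) (x i b) - x i j)) :
    ∀ N : Finset ι, N.Nonempty →
      ∀ (c : EuclideanSpace ℝ (Fin 2)) (r : ℝ),
        (∀ j ∈ N, dist (x 0 j) c ≤ r) →
        ∃ m : ℕ, (∃ P, ∀ j ∈ N, x m j = P) ∧
          ∑ i ∈ Finset.range m, d i ≤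
            (((Fintype.card ι - N.card : ℕ) : ℝ) + 2) * r := by
  classical
  intro N hN c r hr
  obtain ⟨j0, hj0⟩ := hN
  have hr0 : 0 ≤ r := le_trans dist_nonneg (hr j0 hj0)
  -- the diameter of the positions of the reliable robots
  set Φ : ℕ → ℝ := fun i => Metric.diam (↑(N.image (x i)) : Set (EuclideanSpace ℝ (Fin 2))) with hΦdef
  -- the set of positions occupied only by byzantine robots
  set pb : ℕ → Finset (EuclideanSpace ℝ (Fin 2)) :=
    fun i => ((Finset.univ \ N).image (x i)) \ (N.image (x i)) with hpbdef
  have hbdd : ∀ i, Bornology.IsBounded (↑(N.image (x i)) : Set (EuclideanSpace ℝ (Fin 2))) :=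
    fun i => (N.image (x i)).finite_toSet.isBounded
  have hΦnn : ∀ i, 0 ≤ Φ i := fun i => Metric.diam_nonneg
  have hmemdiam : ∀ i p q, p ∈ N → q ∈ N → dist (x i p) (x i q) ≤ Φ i := by
    intro i p q hp hq
    exact Metric.dist_le_diam_of_mem (hbdd i)
      (Finset.mem_coe.2 (Finset.mem_image_of_mem _ hp))
      (Finset.mem_coe.2 (Finset.mem_image_of_mem _ hq))
  -- distance of each robot from the target midpoint is at least `d i`
  have hDd : ∀ i a b, x i a ≠ x i b →
      (∀ p q : ι, x i p ≠ x i q → dist (x i a) (x i b) ≤ dist (x i p) (x i q)) →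
      d i = dist (x i a) (x i b) / 2 →
      ∀ j, d i ≤ dist (x i j) (midpoint ℝ (x i a) (x i b)) := by
    intro i a b hab hmin hd j
    by_cases hja : x i j = x i a
    · rw [hja, dist_left_midpoint', hd]
    · by_cases hjb : x i j = x i b
      · rw [hjb, midpoint_comm, dist_left_midpoint', dist_comm, hd]
      · have h2 := hmin j a (fun h => hja h)
        have h3 : dist (midpoint ℝ (x i a) (x i b)) (x i a) = dist (x i a) (x i b) / 2 := by
          rw [dist_comm, dist_left_midpoint']
        have h4 := dist_triangle (x i j) (midpoint ℝ (x i a) (x i b)) (x i a)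
        rw [hd]; linarith
  -- distances between robots never increase
  have hcontract : ∀ i (p q : ι), dist (x (i+1) p) (x (i+1) q) ≤ dist (x i p) (x i q) := by
    intro i p q
    by_cases h : ∃ P, ∀ j : ι, x i j = P
    · rw [(hgathered i h).1]
    · obtain ⟨a, b, hab, hmin, hd, hupd⟩ := hstep i h
      have hdpos : 0 < d i := by rw [hd]; exact half_pos (dist_pos.2 hab)
      rw [hupd p, hupd q]
      exact ssi_contract _ _ _ _ hdpos (hDd i a b hab hmin hd p) (hDd i a b hab hmin hd q)
  have hΦmono : ∀ i, Φ (i+1) ≤ Φ i := by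
    intro i
    apply Metric.diam_le_of_forall_dist_le (hΦnn i)
    rintro u hu v hv
    obtain ⟨p, hp, rfl⟩ := Finset.mem_image.1 (Finset.mem_coe.1 hu)
    obtain ⟨q, hq, rfl⟩ := Finset.mem_image.1 (Finset.mem_coe.1 hv)
    exact (hcontract i p q).trans (hmemdiam i p q hp hq)
  have hΦ0 : Φ 0 ≤ 2 * r := by
    apply Metric.diam_le_of_forall_dist_le (by linarith)
    rintro u hu v hv
    obtain ⟨p, hp, rfl⟩ := Finset.mem_image.1 (Finset.mem_coe.1 hu)
    obtain ⟨q, hq, rfl⟩ := Finset.mem_image.1 (Finset.mem_coe.1 hv)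
    calc dist (x 0 p) (x 0 q) ≤ dist (x 0 p) c + dist (x 0 q) c := dist_triangle_right _ _ _
      _ ≤ r + r := add_le_add (hr p hp) (hr q hq)
      _ = 2 * r := by ring
  have hΦle : ∀ i, Φ i ≤ 2 * r := by
    intro i
    induction i with
    | zero => exact hΦ0
    | succ n ih => exact (hΦmono n).trans ih
  -- main induction
  have key : ∀ n i, (Finset.image (x i) Finset.univ).card ≤ n →
      ∃ m, i ≤ m ∧ (∃ P, ∀ j ∈ N, x m j = P) ∧
        ∑ t ∈ Finset.Ico i m, d t ≤ Φ i + r * ((pb i).card : ℝ) := by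
    intro n
    induction n with
    | zero =>
      intro i hcard
      have h1 : (0:ℕ) < (Finset.image (x i) Finset.univ).card :=
        Finset.card_pos.2 (Finset.univ_nonempty.image _)
      omega
    | succ n ih =>
      intro i hcard
      by_cases hg : ∃ P, ∀ j ∈ N, x i j = P
      · refine ⟨i, le_rfl, hg, ?_⟩
        rw [Finset.Ico_self, Finset.sum_empty]
        exact add_nonneg (hΦnn i) (mul_nonneg hr0 (Nat.cast_nonneg _))
      · have hgι : ¬ ∃ P, ∀ j : ι, x i j = P := by
          rintro ⟨P, hP⟩; exact hg ⟨P, fun j _ => hP j⟩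
        obtain ⟨a, b, hab, hmin, hd, hupd⟩ := hstep i hgι
        set D := midpoint ℝ (x i a) (x i b) with hDdef
        have hdpos : 0 < d i := by rw [hd]; exact half_pos (dist_pos.2 hab)
        have hDd' : ∀ j, d i ≤ dist (x i j) D := hDd i a b hab hmin hd
        set stepf : EuclideanSpace ℝ (Fin 2) → EuclideanSpace ℝ (Fin 2) :=
          fun P => P + (d i / dist P D) • (D - P) with hstepfdef
        have hupd' : ∀ j, x (i+1) j = stepf (x i j) := fun j => hupd j
        have hda : dist (x i a) D = d i := by rw [hDdef, dist_left_midpoint', hd]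
        have hdb : dist (x i b) D = d i := by
          rw [hDdef, midpoint_comm, dist_left_midpoint', dist_comm, hd]
        have hmova : stepf (x i a) = D := by
          rw [hstepfdef]; simp only [hda, div_self hdpos.ne', one_smul]; abel
        have hmovb : stepf (x i b) = D := by
          rw [hstepfdef]; simp only [hdb, div_self hdpos.ne', one_smul]; abel
        -- the number of distinct positions strictly decreases
        have hsub : Finset.image (x (i+1)) Finset.univ ⊆
            Finset.image stepf ((Finset.image (x i) Finset.univ).erase (x i b)) := by
          intro P hP
          obtain ⟨j, -, rfl⟩ := Finset.mem_image.1 hP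
          rw [hupd' j]
          by_cases hjb : x i j = x i b
          · rw [hjb, hmovb, ← hmova]
            exact Finset.mem_image_of_mem _ (Finset.mem_erase.2
              ⟨hab, Finset.mem_image_of_mem _ (Finset.mem_univ a)⟩)
          · exact Finset.mem_image_of_mem _ (Finset.mem_erase.2
              ⟨hjb, Finset.mem_image_of_mem _ (Finset.mem_univ j)⟩)
        have hcard' : (Finset.image (x (i+1)) Finset.univ).card ≤ n := by
          have h1 := Finset.card_le_card hsub
          have h2 := Finset.card_image_le (f := stepf)
            (s := (Finset.image (x i) Finset.univ).erase (x i b))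
          have h3 : (x i b) ∈ Finset.image (x i) Finset.univ :=
            Finset.mem_image_of_mem _ (Finset.mem_univ b)
          have h4 := Finset.card_erase_of_mem h3
          have h5 : 0 < (Finset.image (x i) Finset.univ).card := Finset.card_pos.2 ⟨_, h3⟩
          omega
        obtain ⟨m, him, hmg, hsum⟩ := ih (i+1) hcard'
        refine ⟨m, le_trans (Nat.le_succ i) him, hmg, ?_⟩
        rw [Finset.sum_eq_sum_Ico_succ_bot him]
        -- membership preservation for good positions
        have hgoodmem : ∀ {P}, P ∈ N.image (x i) → stepf P ∈ N.image (x (i+1)) := by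
          rintro P hP
          obtain ⟨k, hk, rfl⟩ := Finset.mem_image.1 hP
          exact Finset.mem_image.2 ⟨k, hk, (hupd' k)⟩
        -- pure byzantine positions never multiply
        have hpbsub : pb (i+1) ⊆ Finset.image stepf (pb i) := by
          intro P hP
          rw [hpbdef] at hP
          have hPbad := (Finset.mem_sdiff.1 hP).1
          have hPng := (Finset.mem_sdiff.1 hP).2
          obtain ⟨j, hj, rfl⟩ := Finset.mem_image.1 hPbad
          rw [hupd' j] at hPng ⊢
          have hQ : x i j ∈ pb i := by
            rw [hpbdef]
            refine Finset.mem_sdiff.2 ⟨Finset.mem_image.2 ⟨j, hj, rfl⟩, fun hQg => ?_⟩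
            exact hPng (hgoodmem hQg)
          exact Finset.mem_image_of_mem _ hQ
        have hpbcard : (pb (i+1)).card ≤ (pb i).card :=
          le_trans (Finset.card_le_card hpbsub) Finset.card_image_le
        -- strict decrease of pure byzantine positions when the closest pair is not all-good
        have pure_drop : ∀ e1 e2 : ι, x i e1 ≠ x i e2 → stepf (x i e1) = D →
            stepf (x i e2) = D → x i e2 ∉ N.image (x i) →
            (pb (i+1)).card + 1 ≤ (pb i).card := by
          intro e1 e2 h12 hm1 hm2 hb2
          have he2notN : e2 ∉ N := fun h => hb2 (Finset.mem_image_of_mem _ h)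
          have he2pure : x i e2 ∈ pb i := by
            rw [hpbdef]
            exact Finset.mem_sdiff.2
              ⟨Finset.mem_image.2 ⟨e2, Finset.mem_sdiff.2 ⟨Finset.mem_univ _, he2notN⟩, rfl⟩, hb2⟩
          have hsubp : pb (i+1) ⊆ Finset.image stepf ((pb i).erase (x i e2)) := by
            intro P hP
            rw [hpbdef] at hP
            have hPbad := (Finset.mem_sdiff.1 hP).1
            have hPng := (Finset.mem_sdiff.1 hP).2
            obtain ⟨j, hj, rfl⟩ := Finset.mem_image.1 hPbad
            rw [hupd' j] at hPng ⊢
            have hQ : x i j ∈ pb i := by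
              rw [hpbdef]
              refine Finset.mem_sdiff.2 ⟨Finset.mem_image.2 ⟨j, hj, rfl⟩, fun hQg => ?_⟩
              exact hPng (hgoodmem hQg)
            by_cases hje2 : x i j = x i e2
            · have he1pure : x i e1 ∈ pb i := by
                by_cases hg1 : x i e1 ∈ N.image (x i)
                · exfalso
                  apply hPng
                  rw [hje2, hm2, ← hm1]
                  exact hgoodmem hg1
                · have he1notN : e1 ∉ N := fun h => hg1 (Finset.mem_image_of_mem _ h)
                  rw [hpbdef]
                  exact Finset.mem_sdiff.2
                    ⟨Finset.mem_image.2
                      ⟨e1, Finset.mem_sdiff.2 ⟨Finset.mem_univ _, he1notN⟩, rfl⟩, hg1⟩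
              rw [hje2, hm2, ← hm1]
              exact Finset.mem_image_of_mem _ (Finset.mem_erase.2 ⟨h12, he1pure⟩)
            · exact Finset.mem_image_of_mem _ (Finset.mem_erase.2 ⟨hje2, hQ⟩)
          have h1 := Finset.card_le_card hsubp
          have h2 := Finset.card_image_le (f := stepf) (s := (pb i).erase (x i e2))
          have h4 := Finset.card_erase_of_mem he2pure
          have h5 : 0 < (pb i).card := Finset.card_pos.2 ⟨_, he2pure⟩
          omega
        by_cases hGG : x i a ∈ N.image (x i) ∧ x i b ∈ N.image (x i)
        · -- good step: the diameter of the reliable robots decreases by `d i`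
          obtain ⟨a', ha'N, ha'⟩ := Finset.mem_image.1 hGG.1
          obtain ⟨b', hb'N, hb'⟩ := Finset.mem_image.1 hGG.2
          have habΦ : 2 * d i ≤ Φ i := by
            have h := hmemdiam i a' b' ha'N hb'N
            rw [ha', hb'] at h
            rw [hd] at *
            linarith
          have hDgood : ∀ p : ι, p ∈ N → dist (x i p) D ≤ Φ i := by
            intro p hp
            refine (dist_midpoint_le_max _ _ _).trans (max_le ?_ ?_)
            · rw [← ha']; exact hmemdiam i p a' hp ha'N
            · rw [← hb']; exact hmemdiam i p b' hp hb'N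
          have hPhi : Φ (i+1) ≤ Φ i - d i := by
            apply Metric.diam_le_of_forall_dist_le (by linarith [hdpos, habΦ])
            rintro u hu v hv
            obtain ⟨p, hp, rfl⟩ := Finset.mem_image.1 (Finset.mem_coe.1 hu)
            obtain ⟨q, hq, rfl⟩ := Finset.mem_image.1 (Finset.mem_coe.1 hv)
            rw [hupd' p, hupd' q]
            exact ssi_G _ _ _ _ _ hdpos (hDd' p) (hDd' q) (hDgood p hp) (hDgood q hq)
              (hmemdiam i p q hp hq)
          have hc : ((pb (i+1)).card : ℝ) ≤ ((pb i).card : ℝ) := Nat.cast_le.2 hpbcard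
          have := mul_le_mul_of_nonneg_left hc hr0
          linarith [hsum, hPhi]
        · -- byzantine step: `d i ≤ r` and a pure byzantine position disappears
          have hdr : d i ≤ r := by
            rw [not_exists] at hg
            have hg' := hg (x i j0)
            push_neg at hg'
            obtain ⟨q, hqN, hqne⟩ := hg'
            have h1 := hmin q j0 hqne
            have h2 := hmemdiam i q j0 hqN hj0
            have h3 := hΦle i
            rw [hd]; linarith
          have hγ : (pb (i+1)).card + 1 ≤ (pb i).card := by
            rcases not_and_or.1 hGG with h | h
            · exact pure_drop b a (Ne.symm hab) hmovb hmova h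
            · exact pure_drop a b hab hmova hmovb h
          have hφ : Φ (i+1) ≤ Φ i := hΦmono i
          have hcast : ((pb (i+1)).card : ℝ) + 1 ≤ ((pb i).card : ℝ) := by
            exact_mod_cast hγ
          have := mul_le_mul_of_nonneg_left hcast hr0
          linarith [hsum]
  obtain ⟨m, -, hmg, hsum⟩ := key (Finset.image (x 0) Finset.univ).card 0 le_rfl
  refine ⟨m, hmg, ?_⟩
  rw [← Finset.range_eq_Ico] at hsum
  have hγ0 : ((pb 0).card : ℝ) ≤ ((Fintype.card ι - N.card : ℕ) : ℝ) := by
    have h1 : (pb 0).card ≤ (Finset.univ \ N).card := by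
      rw [hpbdef]
      exact le_trans (Finset.card_le_card (Finset.sdiff_subset)) Finset.card_image_le
    have h2 : (Finset.univ \ N).card = Fintype.card ι - N.card := by
      rw [Finset.card_sdiff_of_subset (Finset.subset_univ N), Finset.card_univ]
    exact_mod_cast h1.trans_eq h2
  have hmul := mul_le_mul_of_nonneg_left hγ0 hr0
  have hring : (((Fintype.card ι - N.card : ℕ) : ℝ) + 2) * r =
      2 * r + r * ((Fintype.card ι - N.card : ℕ) : ℝ) := by ring
  rw [hring]
  linarith [hsum, hΦ0]
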